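/- Let μ be a Borel probability measure and g a positive measurable function such that g^s is μ-integrable for every s > 0 and μ(g^s) > 0 for every s > 0. Then the map p ↦ (p/(2(p−1)²)) · [ μ(g²) − μ(g^{2/p})^p · (μ(g²)/μ(g^{2/p})^p)^{(2/p)−1} ] is nonincreasing on (1,∞). -/

import Mathlib

/-!
With `A = μ(g²)` and `B_r = μ(g^{2/r})`, the bracket equals `A - A^{2/r-1} B_r^{2r-2}`, so the
functional is `A · r/(2(r-1)²) · (1 - exp E(r))` with `E(r) = (2r-2) log B_r + (2/r-2) log A`.
For `1 < p < q`, `2/p` is the convex combination of `2/q` and `2` with weight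
`θ = (p-1)q/(p(q-1))` on `2/q`, so Hölder gives `B_p ≤ B_q^θ A^{1-θ}`. With
`s = q log B_q - log A` this yields `E(q) = α_q s` and `E(p) ≤ α_p s`, where
`α_r = 2(r-1)²/(r(q-1))`, and both sides of the comparison become `(1/(q-1)) (1 - e^{αs})/α` at
`α = α_q` and at `α = α_p ≤ α_q`. Finally `α ↦ (1 - e^{αs})/α` is nonincreasing, being minus
the slope at `0` of a secant of the convex function `α ↦ e^{αs}`.
-/

open MeasureTheory Real

section Holder

variable {Ω : Type*} [MeasurableSpace Ω] {μ : Measure Ω}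

theorem MeasureTheory.Integrable.memLp_rpow_of_nonneg {f : Ω → ℝ} (hf : Integrable f μ)
    (hf0 : 0 ≤ᵐ[μ] f) {θ : ℝ} (hθ : 0 < θ) :
    MemLp (fun x => f x ^ θ) (ENNReal.ofReal (1 / θ)) μ := by
  have h := (memLp_one_iff_integrable.2 hf).norm_rpow_div (ENNReal.ofReal θ)
  rw [ENNReal.toReal_ofReal hθ.le, ← ENNReal.ofReal_one, ← ENNReal.ofReal_div_of_pos hθ] at h
  refine h.ae_eq ?_
  filter_upwards [hf0] with x hx
  rw [Real.norm_of_nonneg hx]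

theorem integral_rpow_mul_rpow_le {f h : Ω → ℝ} (hf : Integrable f μ) (hh : Integrable h μ)
    (hf0 : 0 ≤ᵐ[μ] f) (hh0 : 0 ≤ᵐ[μ] h) {θ : ℝ} (hθ0 : 0 < θ) (hθ1 : θ < 1) :
    ∫ x, f x ^ θ * h x ^ (1 - θ) ∂μ ≤ (∫ x, f x ∂μ) ^ θ * (∫ x, h x ∂μ) ^ (1 - θ) := by
  have hθ1' : 0 < 1 - θ := sub_pos.2 hθ1
  have holder := integral_mul_le_Lp_mul_Lq_of_nonneg
    (Real.holderConjugate_one_div hθ0 hθ1' (add_sub_cancel θ 1))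
    (by filter_upwards [hf0] with x hx using Real.rpow_nonneg hx θ)
    (by filter_upwards [hh0] with x hx using Real.rpow_nonneg hx (1 - θ))
    (hf.memLp_rpow_of_nonneg hf0 hθ0) (hh.memLp_rpow_of_nonneg hh0 hθ1')
  have rpow_rpow_inv : ∀ {u : Ω → ℝ} {t : ℝ}, 0 ≤ᵐ[μ] u → 0 < t →
      ∫ x, (u x ^ t) ^ (1 / t) ∂μ = ∫ x, u x ∂μ := fun hu ht =>
    integral_congr_ae <| by
      filter_upwards [hu] with x hx
      rw [← Real.rpow_mul hx, mul_one_div_cancel ht.ne', Real.rpow_one]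
  rwa [rpow_rpow_inv hf0 hθ0, rpow_rpow_inv hh0 hθ1', one_div_one_div, one_div_one_div] at holder

theorem integral_rpow_convex_combination_le {g : Ω → ℝ} (hg : ∀ᵐ x ∂μ, 0 < g x)
    {r₁ r₂ θ : ℝ} (h₁ : Integrable (fun x => g x ^ r₁) μ) (h₂ : Integrable (fun x => g x ^ r₂) μ)
    (hθ0 : 0 < θ) (hθ1 : θ < 1) :
    ∫ x, g x ^ (θ * r₁ + (1 - θ) * r₂) ∂μ ≤
      (∫ x, g x ^ r₁ ∂μ) ^ θ * (∫ x, g x ^ r₂ ∂μ) ^ (1 - θ) := by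
  have rpow_nonneg (r : ℝ) : 0 ≤ᵐ[μ] fun x => g x ^ r := by
    filter_upwards [hg] with x hx using Real.rpow_nonneg hx.le r
  refine le_of_eq_of_le (integral_congr_ae ?_)
    (integral_rpow_mul_rpow_le h₁ h₂ (rpow_nonneg r₁) (rpow_nonneg r₂) hθ0 hθ1)
  filter_upwards [hg] with x hx
  rw [Real.rpow_add hx, ← Real.rpow_mul hx.le, ← Real.rpow_mul hx.le, mul_comm r₁,
    mul_comm r₂]

end Holder

theorem one_sub_exp_mul_div_le {a b : ℝ} (s : ℝ) (ha : 0 < a) (hab : a ≤ b) :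
    (1 - exp (b * s)) / b ≤ (1 - exp (a * s)) / a := by
  have hconv : ConvexOn ℝ Set.univ fun x => exp (x * s) :=
    convexOn_exp.comp_linearMap (LinearMap.id.smulRight s)
  have := hconv.secant_mono (a := 0) (Set.mem_univ _) (Set.mem_univ a) (Set.mem_univ b)
    ha.ne' (ha.trans_le hab).ne' hab
  simp only [zero_mul, exp_zero, sub_zero] at this
  rw [← neg_le_neg_iff, ← neg_div, ← neg_div, neg_sub, neg_sub]
  exact this

theorem mul_one_sub_exp_le_of_le_interpolation {p q a b c : ℝ} (hp : 1 < p) (hpq : p ≤ q)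
    (hc : c ≤ (p - 1) * q / (p * (q - 1)) * b + (1 - (p - 1) * q / (p * (q - 1))) * a) :
    q / (2 * (q - 1) ^ 2) * (1 - exp ((2 * q - 2) * b + (2 / q - 2) * a)) ≤
      p / (2 * (p - 1) ^ 2) * (1 - exp ((2 * p - 2) * c + (2 / p - 2) * a)) := by
  have hp0 : 0 < p := by linarith
  have hq0 : 0 < q := by linarith
  have hp1 : 0 < p - 1 := by linarith
  have hq1 : 0 < q - 1 := by linarith
  set s := q * b - a
  set αp := 2 * (p - 1) ^ 2 / (p * (q - 1))
  set αq := 2 * (q - 1) / q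
  have hαp : 0 < αp := by positivity
  have hαpq : αp ≤ αq := by
    rw [div_le_div_iff₀ (by positivity) hq0]
    nlinarith [mul_nonneg (sub_nonneg.2 hpq) (show (0:ℝ) ≤ p * q - 1 by nlinarith)]
  have hq_exp : (2 * q - 2) * b + (2 / q - 2) * a = αq * s := by
    simp only [αq, s]
    field_simp
    ring
  have hp_exp : (2 * p - 2) * c + (2 / p - 2) * a ≤ αp * s :=
    calc (2 * p - 2) * c + (2 / p - 2) * a
        ≤ (2 * p - 2) * ((p - 1) * q / (p * (q - 1)) * b
            + (1 - (p - 1) * q / (p * (q - 1))) * a) + (2 / p - 2) * a := by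
          gcongr
          linarith
      _ = αp * s := by
          simp only [αp, s]
          field_simp
          ring
  calc q / (2 * (q - 1) ^ 2) * (1 - exp ((2 * q - 2) * b + (2 / q - 2) * a))
      = 1 / (q - 1) * ((1 - exp (αq * s)) / αq) := by
        rw [hq_exp]
        simp only [αq]
        field_simp
    _ ≤ 1 / (q - 1) * ((1 - exp (αp * s)) / αp) := by
        gcongr ?_ * ?_
        exact one_sub_exp_mul_div_le s hαp hαpq
    _ = p / (2 * (p - 1) ^ 2) * (1 - exp (αp * s)) := by
        simp only [αp]
        field_simp
    _ ≤ p / (2 * (p - 1) ^ 2) * (1 - exp ((2 * p - 2) * c + (2 / p - 2) * a)) := by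
        gcongr

noncomputable def phiEntropyFunctional (A B r : ℝ) : ℝ :=
  r / (2 * (r - 1) ^ 2) * (A - B ^ r * (A / B ^ r) ^ (2 / r - 1))

theorem phiEntropyFunctional_eq {A B r : ℝ} (hA : 0 < A) (hB : 0 < B) (hr : r ≠ 0) :
    phiEntropyFunctional A B r =
      A * (r / (2 * (r - 1) ^ 2) * (1 - exp ((2 * r - 2) * log B + (2 / r - 2) * log A))) := by
  have hBr : 0 < B ^ r := rpow_pos_of_pos hB r
  have hexp : B ^ r * (A / B ^ r) ^ (2 / r - 1) =
      A * exp ((2 * r - 2) * log B + (2 / r - 2) * log A) := by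
    rw [rpow_def_of_pos (div_pos hA hBr), log_div hA.ne' hBr.ne', log_rpow hB,
      rpow_def_of_pos hB, ← exp_add, ← exp_log hA, ← exp_add, log_exp]
    congr 1
    field_simp
    ring
  rw [phiEntropyFunctional, hexp]
  ring

theorem phiEntropyFunctional_le {A Bp Bq p q : ℝ} (hA : 0 < A) (hBp : 0 < Bp) (hBq : 0 < Bq)
    (hp : 1 < p) (hpq : p ≤ q)
    (hB : Bp ≤ Bq ^ ((p - 1) * q / (p * (q - 1))) * A ^ (1 - (p - 1) * q / (p * (q - 1)))) :
    phiEntropyFunctional A Bq q ≤ phiEntropyFunctional A Bp p := by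
  have hlog := log_le_log hBp hB
  rw [log_mul (rpow_pos_of_pos hBq _).ne' (rpow_pos_of_pos hA _).ne', log_rpow hBq,
    log_rpow hA] at hlog
  rw [phiEntropyFunctional_eq hA hBq (by linarith), phiEntropyFunctional_eq hA hBp (by linarith)]
  exact mul_le_mul_of_nonneg_left (mul_one_sub_exp_le_of_le_interpolation hp hpq hlog) hA.le

theorem refined_phi_entropy_functional_antitone_general
    {Ω : Type*} [MeasurableSpace Ω] (μ : Measure Ω)
    (g : Ω → ℝ) (hgpos : ∀ x, 0 < g x)
    (hint : ∀ s : ℝ, 0 < s → Integrable (fun x => g x ^ s) μ)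
    (hpos : ∀ s : ℝ, 0 < s → 0 < ∫ x, g x ^ s ∂μ) :
    AntitoneOn
      (fun p : ℝ =>
        p / (2 * (p - 1) ^ 2) *
          ((∫ x, g x ^ (2 : ℝ) ∂μ) - (∫ x, g x ^ (2 / p) ∂μ) ^ p *
            ((∫ x, g x ^ (2 : ℝ) ∂μ) / (∫ x, g x ^ (2 / p) ∂μ) ^ p) ^ (2 / p - 1)))
      (Set.Ioi (1 : ℝ)) := by
  intro p (hp : 1 < p) q (hq : 1 < q) hpq
  rcases hpq.eq_or_lt with rfl | hlt
  · exact le_rfl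
  have hp0 : 0 < p := by linarith
  have hq1 : 0 < q - 1 := by linarith
  have hθ0 : 0 < (p - 1) * q / (p * (q - 1)) := by
    apply div_pos <;> apply mul_pos <;> linarith
  have hθ1 : (p - 1) * q / (p * (q - 1)) < 1 := by
    rw [div_lt_one (by positivity)]
    linarith
  have hexponent : (p - 1) * q / (p * (q - 1)) * (2 / q)
      + (1 - (p - 1) * q / (p * (q - 1))) * 2 = 2 / p := by
    field_simp
    ring
  have hHolder := integral_rpow_convex_combination_le (ae_of_all μ hgpos)
    (hint (2 / q) (by positivity)) (hint 2 two_pos) hθ0 hθ1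
  rw [hexponent] at hHolder
  exact phiEntropyFunctional_le (hpos 2 two_pos) (hpos _ (by positivity))
    (hpos _ (by positivity)) hp hpq hHolder

/-- Let `μ` be a Borel probability measure and `g` a positive measurable
function such that `g^s` is `μ`-integrable and `μ(g^s) > 0` for every `s > 0`.  Then the map
`p ↦ (p/(2(p−1)²)) · [ μ(g²) − μ(g^{2/p})^p · (μ(g²)/μ(g^{2/p})^p)^{2/p−1} ]`
is nonincreasing on `(1,∞)`. -/
theorem refined_phi_entropy_functional_antitone
    {Ω : Type*} [MeasurableSpace Ω] (μ : Measure Ω) [IsProbabilityMeasure μ]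
    (g : Ω → ℝ) (hg : Measurable g) (hgpos : ∀ x, 0 < g x)
    (hint : ∀ s : ℝ, 0 < s → Integrable (fun x => g x ^ s) μ)
    (hpos : ∀ s : ℝ, 0 < s → 0 < ∫ x, g x ^ s ∂μ) :
    AntitoneOn
      (fun p : ℝ =>
        p / (2 * (p - 1) ^ 2) *
          ((∫ x, g x ^ (2 : ℝ) ∂μ) - (∫ x, g x ^ (2 / p) ∂μ) ^ p *
            ((∫ x, g x ^ (2 : ℝ) ∂μ) / (∫ x, g x ^ (2 / p) ∂μ) ^ p) ^ (2 / p - 1)))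
      (Set.Ioi (1 : ℝ)) :=
  refined_phi_entropy_functional_antitone_general μ g hgpos hint hpos
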